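/- arXiv:2301.02605 — 3 statements merged into one kernel-verified Lean document; each statement's English description precedes it below -/
import Mathlib

section
/- Let d ≥ 2 be an integer, let V : ℝⁿ → ℝ be of class C¹, and let u : (0,∞) → ℝⁿ be a radial profile for V such that u(r) → u₀ ∈ ℝⁿ and u'(r) → 0 as r → 0⁺. Then u'(r)/r → ∇V(u₀)/d as r → 0⁺. -/
open Set Filter Topology Asymptotics

/-! Multiplying the radial equation by `r ^ (d - 1)` puts it in divergence form
`(r ^ (d - 1) • u')' = r ^ (d - 1) • ∇V(u)`. Since `r ^ (d - 1) • u' r → 0`, this says that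
`r ^ (d - 1) • u' r` is the primitive of `r ^ (d - 1) • ∇V(u r)` vanishing at `0`; as
`∇V(u r) → ∇V(u₀)`, that primitive is `r ^ d / d • ∇V(u₀) + o(r ^ d)`. -/

theorem ContDiff.continuous_gradient {F : Type*} [NormedAddCommGroup F] [InnerProductSpace ℝ F]
    [CompleteSpace F] {V : F → ℝ} (hV : ContDiff ℝ 1 V) : Continuous (gradient V) :=
  (InnerProductSpace.toDual ℝ F).symm.continuous.comp (hV.continuous_fderiv one_ne_zero)

section

variable {E : Type*} [NormedAddCommGroup E] [NormedSpace ℝ E]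

theorem hasDerivAt_pow_smul_of_radial {v h : ℝ → E} {k : ℕ} {r : ℝ} (hr : r ≠ 0)
    (hv : HasDerivAt v (-((k : ℝ) / r) • v r + h r) r) :
    HasDerivAt (fun s => s ^ k • v s) (r ^ k • h r) r := by
  have hcoef : r ^ k * -((k : ℝ) / r) + k * r ^ (k - 1) = 0 := by
    cases k with
    | zero => simp
    | succ m => simp only [Nat.cast_succ, add_tsub_cancel_right, pow_succ]; field_simp; ring
  refine ((hasDerivAt_pow k r).smul hv).congr_deriv ?_
  rw [smul_add, smul_smul, add_comm, ← add_assoc, ← add_smul, add_comm (_ * _), hcoef, zero_smul,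
    zero_add]

theorem norm_le_mul_of_norm_deriv_le_of_tendsto_zero {G G' : ℝ → E} {r C : ℝ}
    (hG : ∀ x ∈ Ioc 0 r, HasDerivAt G (G' x) x) (hG0 : Tendsto G (𝓝[>] 0) (𝓝 0))
    (hbound : ∀ x ∈ Ioc 0 r, ‖G' x‖ ≤ C) (hr : 0 < r) : ‖G r‖ ≤ C * r := by
  have hsegment : ∀ a ∈ Ioo 0 r, ‖G r - G a‖ ≤ C * (r - a) := fun a ha =>
    norm_image_sub_le_of_norm_deriv_le_segment'
      (fun x hx => (hG x ⟨ha.1.trans_le hx.1, hx.2⟩).hasDerivWithinAt)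
      (fun x hx => hbound x ⟨ha.1.trans_le hx.1, hx.2.le⟩) r ⟨ha.2.le, le_rfl⟩
  have hlim : Tendsto (fun a => ‖G r - G a‖) (𝓝[>] 0) (𝓝 ‖G r - 0‖) :=
    (tendsto_const_nhds.sub hG0).norm
  have hlim' : Tendsto (fun a => C * (r - a)) (𝓝[>] 0) (𝓝 (C * (r - 0))) :=
    (tendsto_const_nhds.sub (tendsto_id.mono_left nhdsWithin_le_nhds)).const_mul C
  simpa using le_of_tendsto_of_tendsto hlim hlim'
    (eventually_of_mem (Ioo_mem_nhdsGT hr) hsegment)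

theorem isLittleO_pow_succ_of_hasDerivAt {G G' : ℝ → E} {k : ℕ}
    (hG : ∀ r, 0 < r → HasDerivAt G (G' r) r) (hG0 : Tendsto G (𝓝[>] 0) (𝓝 0))
    (hG' : G' =o[𝓝[>] 0] fun r => r ^ k) : G =o[𝓝[>] 0] fun r => r ^ (k + 1) := by
  rw [isLittleO_iff]
  intro c hc
  obtain ⟨δ, hδ, hδG'⟩ := mem_nhdsGT_iff_exists_Ioo_subset.mp (hG'.def hc)
  filter_upwards [Ioo_mem_nhdsGT hδ] with r hr
  have hbound : ∀ x ∈ Ioc 0 r, ‖G' x‖ ≤ c * r ^ k := fun x hx => by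
    calc ‖G' x‖ ≤ c * ‖x ^ k‖ := hδG' ⟨hx.1, hx.2.trans_lt hr.2⟩
      _ = c * x ^ k := by rw [Real.norm_of_nonneg (pow_nonneg hx.1.le k)]
      _ ≤ c * r ^ k := by gcongr; exacts [hx.1.le, hx.2]
  calc ‖G r‖ ≤ c * r ^ k * r :=
        norm_le_mul_of_norm_deriv_le_of_tendsto_zero (fun x hx => hG x hx.1) hG0 hbound hr.1
    _ = c * ‖r ^ (k + 1)‖ := by rw [Real.norm_of_nonneg (pow_nonneg hr.1.le _), pow_succ, mul_assoc]

theorem tendsto_inv_pow_smul_of_hasDerivAt {f g : ℝ → E} {L : E} (k : ℕ)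
    (hf : ∀ r, 0 < r → HasDerivAt f (r ^ k • g r) r) (hf0 : Tendsto f (𝓝[>] 0) (𝓝 0))
    (hg : Tendsto g (𝓝[>] 0) (𝓝 L)) :
    Tendsto (fun r => (r ^ (k + 1))⁻¹ • f r) (𝓝[>] 0) (𝓝 (((k : ℝ) + 1)⁻¹ • L)) := by
  set G : ℝ → E := fun r => f r - (((k : ℝ) + 1)⁻¹ * r ^ (k + 1)) • L
  have hG : ∀ r, 0 < r → HasDerivAt G (r ^ k • (g r - L)) r := fun r hr => by
    refine ((hf r hr).sub (((hasDerivAt_pow (k + 1) r).const_mul ((k : ℝ) + 1)⁻¹).smul_const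
      L)).congr_deriv ?_
    rw [smul_sub]
    congr 2
    push_cast
    field_simp
  have hG0 : Tendsto G (𝓝[>] 0) (𝓝 0) := by
    have hpow : Tendsto (fun r : ℝ => ((k : ℝ) + 1)⁻¹ * r ^ (k + 1)) (𝓝[>] 0) (𝓝 0) := by
      simpa using ((continuous_pow (k + 1)).tendsto (0 : ℝ)).const_mul ((k : ℝ) + 1)⁻¹
        |>.mono_left nhdsWithin_le_nhds
    simpa using hf0.sub (hpow.smul_const L)
  have hG' : (fun r => r ^ k • (g r - L)) =o[𝓝[>] 0] fun r => r ^ k := by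
    simpa using (isBigO_refl (fun r : ℝ => r ^ k) _).smul_isLittleO
      ((isLittleO_one_iff ℝ).mpr (tendsto_sub_nhds_zero_iff.mpr hg))
  have hquot := (isLittleO_pow_succ_of_hasDerivAt hG hG0 hG').tendsto_inv_smul_nhds_zero
  have hlim := hquot.add_const (((k : ℝ) + 1)⁻¹ • L)
  rw [zero_add] at hlim
  refine hlim.congr' ?_
  filter_upwards [self_mem_nhdsWithin] with r (hr : 0 < r)
  rw [smul_sub, smul_smul, mul_left_comm, inv_mul_cancel₀ (pow_ne_zero _ hr.ne'), mul_one,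
    sub_add_cancel]

end

theorem radial_profile_tangent_direction_at_origin_general
    {n : ℕ} {d : ℕ} (hd : 2 ≤ d)
    (V : EuclideanSpace ℝ (Fin n) → ℝ) (hV : ContDiff ℝ 1 V)
    (u u' : ℝ → EuclideanSpace ℝ (Fin n))
    (hu' : ∀ r, 0 < r → HasDerivAt u'
      (-(((d : ℝ) - 1) / r) • u' r + gradient V (u r)) r)
    (u₀ : EuclideanSpace ℝ (Fin n))
    (hu0 : Tendsto u (nhdsWithin 0 (Ioi 0)) (nhds u₀))
    (hu'0 : Tendsto u' (nhdsWithin 0 (Ioi 0)) (nhds 0)) :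
    Tendsto (fun r : ℝ => r⁻¹ • u' r) (nhdsWithin 0 (Ioi 0))
      (nhds (((d : ℝ)⁻¹) • gradient V u₀)) := by
  obtain ⟨k, rfl⟩ : ∃ k, d = k + 1 := ⟨d - 1, by omega⟩
  simp only [Nat.cast_add, Nat.cast_one, add_sub_cancel_right] at hu'
  have hdiv : ∀ r, 0 < r → HasDerivAt (fun s => s ^ k • u' s) (r ^ k • gradient V (u r)) r :=
    fun r hr =>
      hasDerivAt_pow_smul_of_radial (h := fun s => gradient V (u s)) hr.ne' (hu' r hr)
  have hvanish : Tendsto (fun s => s ^ k • u' s) (𝓝[>] 0) (𝓝 0) := by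
    simpa using (((continuous_pow k).tendsto (0 : ℝ)).mono_left nhdsWithin_le_nhds).smul hu'0
  have hgrad := (hV.continuous_gradient.tendsto u₀).comp hu0
  push_cast
  refine (tendsto_inv_pow_smul_of_hasDerivAt k hdiv hvanish hgrad).congr' ?_
  filter_upwards [self_mem_nhdsWithin] with r (hr : 0 < r)
  rw [smul_smul, pow_succ, mul_inv_rev, inv_mul_cancel_right₀ (pow_ne_zero _ hr.ne')]

/-- For a radial profile `u` for a `C¹` potential `V` such that
`u(r) → u₀` and `u'(r) → 0` as `r → 0⁺`, one has `u'(r)/r → ∇V(u₀)/d` as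
`r → 0⁺`. -/
theorem radial_profile_tangent_direction_at_origin
    {n : ℕ} (hn : 1 ≤ n) {d : ℕ} (hd : 2 ≤ d)
    (V : EuclideanSpace ℝ (Fin n) → ℝ) (hV : ContDiff ℝ 1 V)
    (u u' : ℝ → EuclideanSpace ℝ (Fin n))
    (hu : ∀ r, 0 < r → HasDerivAt u (u' r) r)
    (hu' : ∀ r, 0 < r → HasDerivAt u'
      (-(((d : ℝ) - 1) / r) • u' r + gradient V (u r)) r)
    (u₀ : EuclideanSpace ℝ (Fin n))
    (hu0 : Tendsto u (nhdsWithin 0 (Ioi 0)) (nhds u₀))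
    (hu'0 : Tendsto u' (nhdsWithin 0 (Ioi 0)) (nhds 0)) :
    Tendsto (fun r : ℝ => r⁻¹ • u' r) (nhdsWithin 0 (Ioi 0))
      (nhds (((d : ℝ)⁻¹) • gradient V u₀)) :=
  radial_profile_tangent_direction_at_origin_general hd V hV u u' hu' u₀ hu0 hu'0
end

section
/- Let d ≥ 2 be an integer, let R > 0, and let V : ℝⁿ → ℝ be of class C¹ and quadratic past radius R. Let u : (0,∞) → ℝⁿ be a radial profile for V such that u(r) converges and u'(r) → 0 as r → 0⁺, and such that u(r) → u_∞ as r → +∞ for some point u_∞ ∈ ℝⁿ with ∇V(u_∞) = 0. Then sup_{r ∈ (0,∞)} |u(r)| < R. -/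
/-!
Write `g = ‖u‖²` and `φ(r) = r^(d-1) ⟪u, u'⟫ = r^(d-1) g'/2`. The equation gives
`φ' = r^(d-1) (‖u'‖² + ⟪u, ∇V(u)⟫)`, and outside the ball of radius `R` the gradient is the
identity, so `φ' > 0` wherever `‖u‖ ≥ R`. Hence if `u` sits at norm `≥ R` at a point where `φ`
vanishes (a critical point of `g`, or the origin, where `u' → 0`), then `g` strictly increases
just to the right of it. Since `∇V(u∞) = 0` forces `‖u∞‖ < R`, a value `‖u(r)‖ ≥ R` would make
`‖u‖` attain its maximum over `(0, ∞)`, which this monotonicity forbids; the same argument at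
the origin rules out `‖u(0⁺)‖ ≥ R`.
-/

open Set Filter
open scoped RealInnerProductSpace Topology

theorem StrictMonoOn.lt_of_tendsto_nhdsGT {β : Type*} [LinearOrder β] [TopologicalSpace β]
    [OrderClosedTopology β] {f : ℝ → β} {a b x : ℝ} {L : β} (hf : StrictMonoOn f (Ioo a b))
    (hL : Tendsto f (𝓝[>] a) (𝓝 L)) (hx : x ∈ Ioo a b) : L < f x := by
  obtain ⟨y, hay, hyx⟩ := exists_between hx.1
  have hy : y ∈ Ioo a b := ⟨hay, hyx.trans hx.2⟩
  have hle : L ≤ f y := le_of_tendsto hL <| mem_of_superset (Ioo_mem_nhdsGT hay) fun z hz =>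
    (hf ⟨hz.1, hz.2.trans hy.2⟩ hy hz.2).le
  exact hle.trans_lt (hf hy hx hyx)

theorem exists_isMaxOn_Ioi_of_tendsto {β : Type*} [LinearOrder β] [TopologicalSpace β]
    [OrderTopology β] {f : ℝ → β} {a b : β} {s : ℝ} (hf : ContinuousOn f (Ioi 0))
    (h0 : Tendsto f (𝓝[>] 0) (𝓝 a)) (htop : Tendsto f atTop (𝓝 b)) (hs : 0 < s)
    (has : a < f s) (hbs : b < f s) : ∃ r, 0 < r ∧ IsMaxOn f (Ioi 0) r := by
  obtain ⟨α, hα, hleft⟩ := mem_nhdsGT_iff_exists_Ioo_subset.1 (h0.eventually (gt_mem_nhds has))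
  obtain ⟨β, hright⟩ := eventually_atTop.1 (htop.eventually (gt_mem_nhds hbs))
  have hK : Icc (min α s) (max β s) ⊆ Ioi 0 := fun t ht => (lt_min hα hs).trans_le ht.1
  obtain ⟨r, hrK, hrmax⟩ := isCompact_Icc.exists_isMaxOn ⟨s, min_le_right α s, le_max_right β s⟩
    (hf.mono hK)
  refine ⟨r, hK hrK, fun t (ht : 0 < t) => ?_⟩
  have hsr : f s ≤ f r := hrmax ⟨min_le_right α s, le_max_right β s⟩
  rcases lt_or_ge t (min α s) with hlt | hge
  · exact (hleft ⟨ht, hlt.trans_le (min_le_left α s)⟩ |>.trans_le hsr).le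
  rcases le_or_gt t (max β s) with hle | hgt
  · exact hrmax ⟨hge, hle⟩
  · exact (hright t ((le_max_left β s).trans hgt.le) |>.trans_le hsr).le

variable {E : Type*} [NormedAddCommGroup E] [InnerProductSpace ℝ E]

def radialFlux (k : ℕ) (u u' : ℝ → E) (r : ℝ) : ℝ := r ^ k * ⟪u r, u' r⟫

theorem tendsto_radialFlux_nhdsGT_zero (k : ℕ) {u u' : ℝ → E} {u₀ : E}
    (hu : Tendsto u (𝓝[>] 0) (𝓝 u₀)) (hu' : Tendsto u' (𝓝[>] 0) (𝓝 0)) :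
    Tendsto (radialFlux k u u') (𝓝[>] 0) (𝓝 0) := by
  have hpow : Tendsto (fun r : ℝ => r ^ k) (𝓝[>] 0) (𝓝 (0 ^ k)) :=
    (continuous_pow k).continuousAt.continuousWithinAt.tendsto
  unfold radialFlux
  simpa using hpow.mul (hu.inner hu')

variable [CompleteSpace E]

theorem hasGradientAt_norm_sq_div_two (x : E) :
    HasGradientAt (fun w : E => ‖w‖ ^ 2 / 2) x x := by
  rw [hasGradientAt_iff_hasFDerivAt]
  have h : HasFDerivAt (fun w : E => ‖w‖ ^ 2 / 2) ((2⁻¹ : ℝ) • 2 • innerSL ℝ x) x := by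
    simpa only [div_eq_inv_mul] using (hasStrictFDerivAt_norm_sq x).hasFDerivAt.const_mul (2⁻¹ : ℝ)
  refine h.congr_fderiv ?_
  ext v
  simp

theorem ContDiff.continuous_gradient_s10 {V : E → ℝ} (hV : ContDiff ℝ 1 V) :
    Continuous (gradient V) :=
  (InnerProductSpace.toDual ℝ E).symm.continuous.comp (hV.continuous_fderiv one_ne_zero)

theorem gradient_eq_self_of_le_norm {V : E → ℝ} {R : ℝ} (hR : 0 < R)
    (hV : Continuous (gradient V)) (hquad : ∀ w : E, R ≤ ‖w‖ → V w = ‖w‖ ^ 2 / 2)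
    {w : E} (hw : R ≤ ‖w‖) : gradient V w = w := by
  have houter : ∀ v : E, R < ‖v‖ → gradient V v = v := fun v hv => by
    have heq : V =ᶠ[𝓝 v] fun w => ‖w‖ ^ 2 / 2 :=
      mem_of_superset ((isOpen_lt continuous_const continuous_norm).mem_nhds hv)
        fun w hw => hquad w (le_of_lt hw)
    rw [heq.gradient_eq, (hasGradientAt_norm_sq_div_two v).gradient]
  have hclosure : w ∈ closure (Metric.closedBall (0 : E) R)ᶜ := by
    rw [closure_compl, interior_closedBall _ hR.ne']
    simpa using hw
  refine closure_minimal (fun v hv => houter v ?_) (isClosed_eq hV continuous_id) hclosure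
  simpa using hv

/-- `u` is a radial profile in dimension `k + 1`, with `u'` its derivative. -/
structure IsRadialProfile (k : ℕ) (V : E → ℝ) (u u' : ℝ → E) : Prop where
  hasDerivAt : ∀ r, 0 < r → HasDerivAt u (u' r) r
  hasDerivAt_deriv : ∀ r, 0 < r → HasDerivAt u' (-((k : ℝ) / r) • u' r + gradient V (u r)) r

namespace IsRadialProfile

variable {k : ℕ} {V : E → ℝ} {u u' : ℝ → E}

theorem hasDerivAt_radialFlux (hu : IsRadialProfile k V u u') {r : ℝ} (hr : 0 < r) :
    HasDerivAt (radialFlux k u u') (r ^ k * (‖u' r‖ ^ 2 + ⟪u r, gradient V (u r)⟫)) r := by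
  refine ((hasDerivAt_pow k r).mul ((hu.hasDerivAt r hr).inner ℝ (hu.hasDerivAt_deriv r hr)))
    |>.congr_deriv ?_
  rw [inner_add_right, inner_smul_right, real_inner_self_eq_norm_sq, real_inner_comm (u' r)]
  rcases k with _ | k
  · simp [add_comm]
  · field_simp
    push_cast
    ring

theorem strictMonoOn_radialFlux (hu : IsRadialProfile k V u u') {a b : ℝ} (ha : 0 ≤ a)
    (hpos : ∀ r ∈ Ioo a b, 0 < ⟪u r, gradient V (u r)⟫) :
    StrictMonoOn (radialFlux k u u') (Ioo a b) := by
  refine strictMonoOn_of_deriv_pos (convex_Ioo a b)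
    (fun r hr => (hu.hasDerivAt_radialFlux (ha.trans_lt hr.1)).continuousAt.continuousWithinAt)
    fun r hr => ?_
  rw [interior_Ioo] at hr
  rw [(hu.hasDerivAt_radialFlux (ha.trans_lt hr.1)).deriv]
  exact mul_pos (pow_pos (ha.trans_lt hr.1) k) (by positivity [hpos r hr])

theorem strictMonoOn_norm (hu : IsRadialProfile k V u u') {a b : ℝ} (ha : 0 ≤ a)
    (hflux : ∀ r ∈ Ioo a b, 0 < radialFlux k u u' r) :
    StrictMonoOn (fun r => ‖u r‖) (Ioo a b) := by
  have hsq : StrictMonoOn (fun r => ‖u r‖ ^ 2) (Ioo a b) := by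
    refine strictMonoOn_of_deriv_pos (convex_Ioo a b)
      (fun r hr => (hu.hasDerivAt r (ha.trans_lt hr.1)).norm_sq.continuousAt.continuousWithinAt)
      fun r hr => ?_
    rw [interior_Ioo] at hr
    rw [(hu.hasDerivAt r (ha.trans_lt hr.1)).norm_sq.deriv]
    have hrk : 0 < r ^ k := pow_pos (ha.trans_lt hr.1) k
    have := pos_of_mul_pos_right (hflux r hr) hrk.le
    linarith
  exact fun x hx y hy hxy => lt_of_pow_lt_pow_left₀ 2 (norm_nonneg _) (hsq hx hy hxy)

theorem eventually_norm_lt (hu : IsRadialProfile k V u u') {a : ℝ} (ha : 0 ≤ a) {w : E}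
    (hV : ContinuousAt (gradient V) w) (hw : 0 < ⟪w, gradient V w⟫)
    (huw : Tendsto u (𝓝[>] a) (𝓝 w)) (hflux : Tendsto (radialFlux k u u') (𝓝[>] a) (𝓝 0)) :
    ∀ᶠ r in 𝓝[>] a, ‖w‖ < ‖u r‖ := by
  have hpos : ∀ᶠ r in 𝓝[>] a, 0 < ⟪u r, gradient V (u r)⟫ :=
    (huw.inner (hV.tendsto.comp huw)).eventually (lt_mem_nhds hw)
  obtain ⟨b, hab, hsub⟩ := mem_nhdsGT_iff_exists_Ioo_subset.1 hpos
  have hflux_mono := hu.strictMonoOn_radialFlux ha hsub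
  have hnorm_mono := hu.strictMonoOn_norm ha fun r hr => hflux_mono.lt_of_tendsto_nhdsGT hflux hr
  filter_upwards [Ioo_mem_nhdsGT hab] with r hr
  exact hnorm_mono.lt_of_tendsto_nhdsGT huw.norm hr

variable {R : ℝ}

theorem norm_lt_of_isMaxOn (hu : IsRadialProfile k V u u') (hV : Continuous (gradient V))
    (hout : ∀ w : E, R ≤ ‖w‖ → 0 < ⟪w, gradient V w⟫) {r : ℝ} (hr : 0 < r)
    (hmax : IsMaxOn (fun t => ‖u t‖) (Ioi 0) r) : ‖u r‖ < R := by
  by_contra! hRr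
  have hcrit : ⟪u r, u' r⟫ = 0 := by
    have hsq : IsMaxOn (fun t => ‖u t‖ ^ 2) (Ioi 0) r := fun t ht =>
      pow_le_pow_left₀ (norm_nonneg _) (hmax ht) 2
    simpa using (hsq.isLocalMax (Ioi_mem_nhds hr)).hasDerivAt_eq_zero (hu.hasDerivAt r hr).norm_sq
  have hflux : Tendsto (radialFlux k u u') (𝓝[>] r) (𝓝 0) := by
    simpa [radialFlux, hcrit] using
      (hu.hasDerivAt_radialFlux hr).continuousAt.continuousWithinAt (s := Ioi r).tendsto
  obtain ⟨s, hgt, hs⟩ := ((hu.eventually_norm_lt hr.le hV.continuousAt (hout _ hRr)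
    (hu.hasDerivAt r hr).continuousAt.continuousWithinAt.tendsto hflux).and
      self_mem_nhdsWithin).exists
  exact ((hmax (hr.trans hs)).trans_lt hgt).false

theorem exists_norm_le_lt (hu : IsRadialProfile k V u u') (hV : Continuous (gradient V))
    (hout : ∀ w : E, R ≤ ‖w‖ → 0 < ⟪w, gradient V w⟫) {u₀ uinf : E}
    (hu0 : Tendsto u (𝓝[>] 0) (𝓝 u₀)) (hu'0 : Tendsto u' (𝓝[>] 0) (𝓝 0))
    (hlim : Tendsto u atTop (𝓝 uinf)) (hcrit : gradient V uinf = 0) :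
    ∃ C < R, ∀ r, 0 < r → ‖u r‖ ≤ C := by
  have huinf : ‖uinf‖ < R := not_le.1 fun h => by simpa [hcrit] using hout uinf h
  have hcont : ContinuousOn (fun r => ‖u r‖) (Ioi 0) := fun r hr =>
    (hu.hasDerivAt r hr).continuousAt.norm.continuousWithinAt
  have hu₀ : ‖u₀‖ < R := by
    by_contra! h
    obtain ⟨s, hgt, hs⟩ := ((hu.eventually_norm_lt le_rfl hV.continuousAt (hout u₀ h) hu0
      (tendsto_radialFlux_nhdsGT_zero k hu0 hu'0)).and self_mem_nhdsWithin).exists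
    obtain ⟨r, hr, hrmax⟩ := exists_isMaxOn_Ioi_of_tendsto hcont hu0.norm hlim.norm hs hgt
      (by linarith)
    exact (hu.norm_lt_of_isMaxOn hV hout hr hrmax).not_ge (h.trans (hgt.trans_le (hrmax hs)).le)
  by_cases h : ∃ s, 0 < s ∧ max ‖u₀‖ ‖uinf‖ < ‖u s‖
  · obtain ⟨s, hs, hgt⟩ := h
    obtain ⟨r, hr, hrmax⟩ := exists_isMaxOn_Ioi_of_tendsto hcont hu0.norm hlim.norm hs
      (max_lt_iff.1 hgt).1 (max_lt_iff.1 hgt).2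
    exact ⟨_, hu.norm_lt_of_isMaxOn hV hout hr hrmax, fun t ht => hrmax ht⟩
  · exact ⟨_, max_lt hu₀ huinf, fun t ht => not_lt.1 fun hgt => h ⟨t, ht, hgt⟩⟩

end IsRadialProfile

theorem radial_profile_a_priori_bound_general
    {n : ℕ} {d : ℕ} (hd : 2 ≤ d) (R : ℝ) (hR : 0 < R)
    (V : EuclideanSpace ℝ (Fin n) → ℝ) (hV : ContDiff ℝ 1 V)
    (hquad : ∀ w : EuclideanSpace ℝ (Fin n), R ≤ ‖w‖ → V w = ‖w‖ ^ 2 / 2)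
    (u u' : ℝ → EuclideanSpace ℝ (Fin n))
    (hu : ∀ r, 0 < r → HasDerivAt u (u' r) r)
    (hu' : ∀ r, 0 < r → HasDerivAt u'
      (-(((d : ℝ) - 1) / r) • u' r + gradient V (u r)) r)
    (hu0 : ∃ u₀ : EuclideanSpace ℝ (Fin n),
      Tendsto u (nhdsWithin 0 (Ioi 0)) (nhds u₀))
    (hu'0 : Tendsto u' (nhdsWithin 0 (Ioi 0)) (nhds 0))
    (uinf : EuclideanSpace ℝ (Fin n))
    (hlim : Tendsto u atTop (nhds uinf))
    (hcrit : gradient V uinf = 0) :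
    ∃ C : ℝ, C < R ∧ ∀ r, 0 < r → ‖u r‖ ≤ C := by
  obtain ⟨u₀, hu0⟩ := hu0
  have hgrad := hV.continuous_gradient_s10
  have hprofile : IsRadialProfile (d - 1) V u u' :=
    ⟨hu, fun r hr => by simpa [Nat.cast_sub (by omega : 1 ≤ d)] using hu' r hr⟩
  have hout : ∀ w, R ≤ ‖w‖ → 0 < ⟪w, gradient V w⟫ := fun w hw => by
    rw [gradient_eq_self_of_le_norm hR hgrad hquad hw, real_inner_self_eq_norm_sq]
    exact pow_pos (hR.trans_le hw) 2
  exact hprofile.exists_norm_le_lt hgrad hout hu0 hu'0 hlim hcrit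

/-- Let `V` be a `C¹` potential quadratic past radius `R`, and
let `u` be a radial profile for `V` such that `u` converges and `u' → 0` as
`r → 0⁺`, and `u(r) → u∞` as `r → +∞` with `∇V(u∞) = 0`. Then
`sup_{r>0} ‖u(r)‖ < R`. -/
theorem radial_profile_a_priori_bound
    {n : ℕ} (hn : 1 ≤ n) {d : ℕ} (hd : 2 ≤ d) (R : ℝ) (hR : 0 < R)
    (V : EuclideanSpace ℝ (Fin n) → ℝ) (hV : ContDiff ℝ 1 V)
    (hquad : ∀ w : EuclideanSpace ℝ (Fin n), R ≤ ‖w‖ → V w = ‖w‖ ^ 2 / 2)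
    (u u' : ℝ → EuclideanSpace ℝ (Fin n))
    (hu : ∀ r, 0 < r → HasDerivAt u (u' r) r)
    (hu' : ∀ r, 0 < r → HasDerivAt u'
      (-(((d : ℝ) - 1) / r) • u' r + gradient V (u r)) r)
    (hu0 : ∃ u₀ : EuclideanSpace ℝ (Fin n),
      Tendsto u (nhdsWithin 0 (Ioi 0)) (nhds u₀))
    (hu'0 : Tendsto u' (nhdsWithin 0 (Ioi 0)) (nhds 0))
    (uinf : EuclideanSpace ℝ (Fin n))
    (hlim : Tendsto u atTop (nhds uinf))
    (hcrit : gradient V uinf = 0) :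
    ∃ C : ℝ, C < R ∧ ∀ r, 0 < r → ‖u r‖ ≤ C :=
  radial_profile_a_priori_bound_general hd R hR V hV hquad u u' hu hu' hu0 hu'0 uinf hlim hcrit
end

section
/- Let d ≥ 2 be an integer, let V : ℝⁿ → ℝ be of class C², and let u : (0,∞) → ℝⁿ be a radial profile for V such that u'(r) → 0 as r → 0⁺. Then there exists an even function v : ℝ → ℝⁿ of class C³ such that v(r) = u(r) for every r > 0, v satisfies v''(r) = −((d−1)/r)·v'(r) + ∇V(v(r)) for every r ≠ 0, and at the origin v'(0) = 0 and v''(0) = ∇V(v(0))/d. -/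
/-!
Multiplying the profile equation by `r ^ (d - 1)` turns it into
`(r ^ (d - 1) u')' = r ^ (d - 1) ∇V(u)`, and `u'(0⁺) = 0` integrates this to `u'(r) = r G(r)` with
`G(r) = ∫₀¹ t ^ (d - 1) ∇V(v(r t)) dt`, where `v` is the even continuous extension of `u`.
Since `G` is even and continuous, `v` is `C¹` with `v' = r G`. Then `∇V ∘ v` is `C¹`, hence so is
`G` (differentiate under the integral), and `r G' = ∇V(v) - d G` gives `v'' = ∇V(v) - (d - 1) G`,
which is `C¹`. At the origin `G(0) = ∇V(v(0)) / d`.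
-/

open Set Filter Topology

variable {E : Type*} [NormedAddCommGroup E] [NormedSpace ℝ E]

theorem ContDiff.gradient {F : Type*} [NormedAddCommGroup F] [InnerProductSpace ℝ F]
    [CompleteSpace F] {V : F → ℝ} {m n : WithTop ℕ∞} (hV : ContDiff ℝ n V) (hmn : m + 1 ≤ n) :
    ContDiff ℝ m (gradient V) :=
  (InnerProductSpace.toDual ℝ F).symm.contDiff.comp (hV.fderiv_right hmn)

theorem contDiff_one_of_hasDerivAt {f g : ℝ → E} (hf : ∀ x, HasDerivAt f (g x) x)
    (hg : Continuous g) : ContDiff ℝ 1 f :=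
  contDiff_one_iff_deriv.2 ⟨fun x => (hf x).differentiableAt, by
    rwa [funext fun x => (hf x).deriv]⟩

theorem continuous_ite_pos_of_tendsto {X : Type*} [TopologicalSpace X] {g : ℝ → X} {L : X}
    (hg : ContinuousOn g (Ioi 0)) (hL : Tendsto g (𝓝[>] 0) (𝓝 L)) :
    Continuous fun r => if 0 < r then g r else L := by
  refine continuous_iff_continuousAt.2 fun r => ?_
  rcases lt_trichotomy r 0 with hr | rfl | hr
  · refine (continuousAt_const : ContinuousAt (fun _ => L) r).congr ?_
    filter_upwards [Iio_mem_nhds hr] with x hx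
    exact (if_neg (not_lt.2 (le_of_lt hx))).symm
  · refine continuousAt_iff_continuous_left_right.2 ⟨?_, ?_⟩
    · exact continuousWithinAt_const.congr (fun x hx => if_neg (not_lt.2 hx))
        (if_neg (lt_irrefl 0))
    · refine continuousWithinAt_Ioi_iff_Ici.1 ?_
      refine (hL.congr' ?_).trans_eq (by simp)
      filter_upwards [self_mem_nhdsWithin] with x hx
      exact (if_pos hx).symm
  · refine (hg.continuousAt (Ioi_mem_nhds hr)).congr ?_
    filter_upwards [Ioi_mem_nhds hr] with x hx
    exact (if_pos hx).symm

theorem Function.Even.hasDerivAt_of_hasDerivAt_pos {v g : ℝ → E} (hv : v.Even)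
    (hv0 : ContinuousAt v 0) (hg : g.Odd) (hg0 : ContinuousAt g 0)
    (hpos : ∀ r, 0 < r → HasDerivAt v (g r) r) (r : ℝ) : HasDerivAt v (g r) r := by
  refine hasDerivAt_of_hasDerivAt_of_ne' (fun y hy => ?_) hv0 hg0 r
  rcases hy.lt_or_gt with hy | hy
  · have h := (hpos (-y) (neg_pos.2 hy)).scomp y (hasDerivAt_neg y)
    rw [hg, neg_one_smul, neg_neg] at h
    exact h.congr_of_eventuallyEq (Eventually.of_forall fun x => (hv x).symm)
  · exact hpos y hy

/-- For `r > 0`, `(k + 1) • radialMean k F r` is the mean of `x ↦ F ‖x‖` over the ball of radius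
`r` in `ℝ^(k+1)`. -/
noncomputable def radialMean (k : ℕ) (F : ℝ → E) (r : ℝ) : E :=
  ∫ t in (0 : ℝ)..1, t ^ k • F (r * t)

namespace radialMean

variable {k : ℕ} {F : ℝ → E}

theorem continuous (hF : Continuous F) : Continuous (radialMean k F) :=
  intervalIntegral.continuous_parametric_intervalIntegral_of_continuous' (by fun_prop) 0 1

theorem even (hF : F.Even) : (radialMean k F).Even := fun r => by
  simp only [radialMean, neg_mul, hF _]

theorem pow_succ_smul (F : ℝ → E) (r : ℝ) :
    r ^ (k + 1) • radialMean k F r = ∫ s in (0 : ℝ)..r, s ^ k • F s := by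
  have h := intervalIntegral.smul_integral_comp_mul_left (fun s => s ^ k • F s) r (a := 0) (b := 1)
  rw [mul_zero, mul_one] at h
  rw [← h, radialMean, pow_succ', mul_smul, ← intervalIntegral.integral_smul]
  simp only [mul_pow, mul_smul]

theorem hasDerivAt (hF : ContDiff ℝ 1 F) (r : ℝ) :
    HasDerivAt (radialMean k F) (radialMean (k + 1) (deriv F) r) r := by
  have hF' : Continuous (deriv F) := hF.continuous_deriv le_rfl
  obtain ⟨M, hM⟩ := (isCompact_closedBall (0 : ℝ) (|r| + 1)).exists_bound_of_continuousOn
    hF'.continuousOn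
  refine (intervalIntegral.hasDerivAt_integral_of_dominated_loc_of_deriv_le (bound := fun _ => M)
    (F' := fun x t => t ^ (k + 1) • deriv F (x * t)) (Metric.ball_mem_nhds r one_pos)
    (Eventually.of_forall fun x => (by fun_prop : Continuous fun t : ℝ => t ^ k • F (x * t)
      ).aestronglyMeasurable) ?_ ?_ ?_ intervalIntegrable_const ?_).2
  · exact (by fun_prop : Continuous fun t : ℝ => t ^ k • F (r * t)).intervalIntegrable 0 1
  · exact (by fun_prop : Continuous fun t : ℝ => t ^ (k + 1) • deriv F (r * t)
      ).aestronglyMeasurable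
  · refine Eventually.of_forall fun t ht x hx => ?_
    rw [uIoc_of_le zero_le_one] at ht
    have hxt : ‖x * t‖ ≤ |r| + 1 := by
      rw [Real.norm_eq_abs, abs_mul, abs_of_pos ht.1]
      have := abs_sub_abs_le_abs_sub x r
      rw [Metric.mem_ball, Real.dist_eq] at hx
      nlinarith [abs_nonneg x, ht.1, ht.2]
    calc ‖t ^ (k + 1) • deriv F (x * t)‖ ≤ 1 * M := by
          rw [norm_smul]
          gcongr
          · rw [norm_pow, Real.norm_eq_abs, abs_of_pos ht.1]
            exact pow_le_one₀ ht.1.le ht.2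
          · exact hM _ (mem_closedBall_zero_iff.2 hxt)
      _ = M := one_mul M
  · refine Eventually.of_forall fun t _ x _ => ?_
    have h := ((hF.differentiable one_ne_zero (x * t)).hasDerivAt.scomp x
      ((hasDerivAt_id x).mul_const t)).const_smul (t ^ k)
    exact h.congr_deriv (by rw [one_mul, pow_succ, mul_smul])

end radialMean

theorem contDiff_one_of_hasDerivAt_smul_radialMean {k : ℕ} {f : E → E} {v : ℝ → E}
    (hf : Continuous f) (hv : ∀ r, HasDerivAt v (r • radialMean k (f ∘ v) r) r) :
    ContDiff ℝ 1 v := by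
  have hv_cont : Continuous v := continuous_iff_continuousAt.2 fun r => (hv r).continuousAt
  exact contDiff_one_of_hasDerivAt hv
    (continuous_id.smul (radialMean.continuous (hf.comp hv_cont)))

variable [CompleteSpace E]

theorem exists_even_continuous_extension_of_tendsto_deriv {u u' : ℝ → E} {L : E}
    (hu : ∀ r, 0 < r → HasDerivAt u (u' r) r) (hu' : ContinuousOn u' (Ioi 0))
    (hL : Tendsto u' (𝓝[>] 0) (𝓝 L)) :
    ∃ v : ℝ → E, Continuous v ∧ v.Even ∧ ∀ r, 0 < r → v r = u r := by
  set U' : ℝ → E := fun r => if 0 < r then u' r else L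
  have hU' : Continuous U' := continuous_ite_pos_of_tendsto hu' hL
  refine ⟨fun r => u 1 + ∫ s in (1 : ℝ)..|r|, U' s, by fun_prop, fun r => by simp only [abs_neg],
    fun r hr => ?_⟩
  have hderiv : ∀ x ∈ uIcc 1 r, HasDerivAt u (U' x) x := fun x hx => by
    have hx0 : 0 < x := lt_of_lt_of_le (lt_min one_pos hr) hx.1
    simpa only [U', if_pos hx0] using hu x hx0
  simp only [abs_of_pos hr, intervalIntegral.integral_eq_sub_of_hasDerivAt hderiv
    (hU'.intervalIntegrable 1 r), add_sub_cancel]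

theorem eq_add_integral_of_hasDerivAt_of_tendsto {φ g : ℝ → E} {c : E}
    (hφ : ∀ x, 0 < x → HasDerivAt φ (g x) x) (hg : Continuous g)
    (hc : Tendsto φ (𝓝[>] 0) (𝓝 c)) {r : ℝ} (hr : 0 < r) :
    φ r = c + ∫ s in (0 : ℝ)..r, g s := by
  have hlim : Tendsto (fun a => φ r + ∫ s in r..a, g s) (𝓝[>] 0)
      (𝓝 (φ r + ∫ s in r..0, g s)) :=
    ((by fun_prop : Continuous fun a => φ r + ∫ s in r..a, g s).tendsto 0).mono_left
      nhdsWithin_le_nhds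
  have heq : (fun a => φ r + ∫ s in r..a, g s) =ᶠ[𝓝[>] 0] φ := by
    filter_upwards [Ioo_mem_nhdsGT hr] with a ha
    rw [intervalIntegral.integral_eq_sub_of_hasDerivAt
      (fun x hx => hφ x (lt_of_lt_of_le (lt_min hr ha.1) hx.1)) (hg.intervalIntegrable r a),
      add_sub_cancel]
  rw [← tendsto_nhds_unique (hlim.congr' heq) hc, intervalIntegral.integral_symm,
    neg_add_cancel_right]

namespace radialMean

variable {k : ℕ} {F : ℝ → E}

theorem apply_zero (F : ℝ → E) : radialMean k F 0 = ((k : ℝ) + 1)⁻¹ • F 0 := by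
  simp only [radialMean, zero_mul, intervalIntegral.integral_smul_const, integral_pow]
  norm_num

theorem smul_succ_deriv_eq (hF : ContDiff ℝ 1 F) (r : ℝ) :
    r • radialMean (k + 1) (deriv F) r = F r - ((k : ℝ) + 1) • radialMean k F r := by
  have hlhs := (hasDerivAt_pow (k + 1) r).smul (hasDerivAt (k := k) hF r)
  have hrhs := (by fun_prop : Continuous fun s : ℝ => s ^ k • F s).integral_hasStrictDerivAt 0 r
  rw [← funext (pow_succ_smul (k := k) F)] at hrhs
  have key := hlhs.unique hrhs.hasDerivAt
  rcases eq_or_ne r 0 with rfl | hr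
  · rw [zero_smul, apply_zero, smul_smul, mul_inv_cancel₀ (by positivity), one_smul, sub_self]
  · refine smul_right_injective E (pow_ne_zero k hr) ?_
    simp only [smul_sub]
    rw [← key, add_tsub_cancel_right, pow_succ]
    push_cast
    module

end radialMean

section RadialProfile

variable {k : ℕ} {f : E → E} {v : ℝ → E}

theorem eq_smul_radialMean_of_radialProfile {u u' : ℝ → E} (hf : Continuous f)
    (hu' : ∀ r, 0 < r → HasDerivAt u' (-((k : ℝ) / r) • u' r + f (u r)) r)
    (hu'0 : Tendsto u' (𝓝[>] 0) (𝓝 0)) (hv : Continuous v) (hvu : ∀ r, 0 < r → v r = u r)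
    {r : ℝ} (hr : 0 < r) : u' r = r • radialMean k (f ∘ v) r := by
  have hflux : ∀ x, 0 < x → HasDerivAt (fun s => s ^ k • u' s) (x ^ k • (f ∘ v) x) x := by
    intro x hx
    refine ((hasDerivAt_pow k x).smul (hu' x hx)).congr_deriv ?_
    have hcoeff : x ^ k * -((k : ℝ) / x) + k * x ^ (k - 1) = 0 := by
      rcases k with _ | k
      · simp
      · rw [Nat.add_sub_cancel, pow_succ]
        field_simp
        ring
    rw [Function.comp_apply, hvu x hx, smul_add, smul_smul, add_right_comm, ← add_smul, hcoeff,
      zero_smul, zero_add]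
  have hflux0 : Tendsto (fun s => s ^ k • u' s) (𝓝[>] 0) (𝓝 0) := by
    simpa using (((continuous_pow k).tendsto 0).mono_left nhdsWithin_le_nhds).smul hu'0
  have h := eq_add_integral_of_hasDerivAt_of_tendsto hflux (by fun_prop) hflux0 hr
  rw [zero_add, ← radialMean.pow_succ_smul, pow_succ, mul_smul] at h
  exact smul_right_injective E (pow_ne_zero k hr.ne') h

variable (hf : ContDiff ℝ 1 f) (hv : ∀ r, HasDerivAt v (r • radialMean k (f ∘ v) r) r)
include hf hv

theorem hasDerivAt_smul_radialMean_comp (r : ℝ) :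
    HasDerivAt (fun r => r • radialMean k (f ∘ v) r)
      (f (v r) - (k : ℝ) • radialMean k (f ∘ v) r) r := by
  have hF : ContDiff ℝ 1 (f ∘ v) :=
    hf.comp (contDiff_one_of_hasDerivAt_smul_radialMean hf.continuous hv)
  have h := (hasDerivAt_id r).smul (radialMean.hasDerivAt (k := k) hF r)
  refine h.congr_deriv ?_
  rw [id_eq, radialMean.smul_succ_deriv_eq hF, Function.comp_apply]
  module

theorem deriv_deriv_eq_of_hasDerivAt_smul_radialMean (r : ℝ) :
    deriv (deriv v) r = f (v r) - (k : ℝ) • radialMean k (f ∘ v) r := by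
  rw [funext fun r => (hv r).deriv]
  exact (hasDerivAt_smul_radialMean_comp hf hv r).deriv

theorem contDiff_three_of_hasDerivAt_smul_radialMean : ContDiff ℝ 3 v := by
  have hF : ContDiff ℝ 1 (f ∘ v) :=
    hf.comp (contDiff_one_of_hasDerivAt_smul_radialMean hf.continuous hv)
  have hG : ContDiff ℝ 1 (radialMean k (f ∘ v)) :=
    contDiff_one_of_hasDerivAt (radialMean.hasDerivAt hF) (radialMean.continuous
      (hF.continuous_deriv le_rfl))
  rw [show (3 : WithTop ℕ∞) = 1 + 1 + 1 from rfl, contDiff_succ_iff_deriv]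
  refine ⟨fun r => (hv r).differentiableAt, by simp, contDiff_succ_iff_deriv.2 ⟨?_, by simp, ?_⟩⟩
  · rw [funext fun r => (hv r).deriv]
    exact fun r => (hasDerivAt_smul_radialMean_comp hf hv r).differentiableAt
  · rw [funext (deriv_deriv_eq_of_hasDerivAt_smul_radialMean hf hv)]
    exact hF.sub (hG.const_smul _)

end RadialProfile

theorem radial_profile_even_C3_extension_general
    {n : ℕ} {d : ℕ} (hd : 2 ≤ d)
    (V : EuclideanSpace ℝ (Fin n) → ℝ) (hV : ContDiff ℝ 2 V)
    (u u' : ℝ → EuclideanSpace ℝ (Fin n))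
    (hu : ∀ r, 0 < r → HasDerivAt u (u' r) r)
    (hu' : ∀ r, 0 < r → HasDerivAt u'
      (-(((d : ℝ) - 1) / r) • u' r + gradient V (u r)) r)
    (hu'0 : Tendsto u' (nhdsWithin 0 (Ioi 0)) (nhds 0)) :
    ∃ v : ℝ → EuclideanSpace ℝ (Fin n),
      ContDiff ℝ 3 v ∧
      (∀ r : ℝ, v (-r) = v r) ∧
      (∀ r, 0 < r → v r = u r) ∧
      (∀ r : ℝ, r ≠ 0 → deriv (deriv v) r
        = -(((d : ℝ) - 1) / r) • deriv v r + gradient V (v r)) ∧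
      deriv v 0 = 0 ∧
      deriv (deriv v) 0 = ((d : ℝ)⁻¹) • gradient V (v 0) := by
  obtain ⟨k, rfl⟩ : ∃ k, d = k + 1 := ⟨d - 1, by omega⟩
  have hk : ((k + 1 : ℕ) : ℝ) - 1 = k := by push_cast; ring
  rw [hk] at hu' ⊢
  have hf : ContDiff ℝ 1 (gradient V) := hV.gradient (by norm_num)
  obtain ⟨v, hv, hv_even, hvu⟩ := exists_even_continuous_extension_of_tendsto_deriv hu
    (fun r hr => (hu' r hr).continuousAt.continuousWithinAt) hu'0
  set G := radialMean k (gradient V ∘ v)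
  have hG : Continuous G := radialMean.continuous (hf.continuous.comp hv)
  have hv' : ∀ r, HasDerivAt v (r • G r) r := by
    refine hv_even.hasDerivAt_of_hasDerivAt_pos hv.continuousAt
      (fun r => by simp only [G, radialMean.even (hv_even.left_comp _) r, neg_smul])
      (continuous_id.smul hG).continuousAt fun r hr => ?_
    rw [← eq_smul_radialMean_of_radialProfile hf.continuous hu' hu'0 hv hvu hr]
    refine (hu r hr).congr_of_eventuallyEq ?_
    filter_upwards [Ioi_mem_nhds hr] with x hx using hvu x hx
  have hv'_eq : deriv v = fun r => r • G r := funext fun r => (hv' r).deriv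
  refine ⟨v, contDiff_three_of_hasDerivAt_smul_radialMean hf hv', hv_even, hvu, fun r hr => ?_,
    by simp [hv'_eq], ?_⟩
  · rw [deriv_deriv_eq_of_hasDerivAt_smul_radialMean hf hv', hv'_eq, smul_smul, neg_mul,
      div_mul_cancel₀ _ hr, neg_smul, neg_add_eq_sub]
  · rw [deriv_deriv_eq_of_hasDerivAt_smul_radialMean hf hv', radialMean.apply_zero,
      Function.comp_apply, smul_smul]
    push_cast
    match_scalars
    field_simp
    ring

/-- Let `u` be a radial profile for a `C²` potential `V` with
`u'(r) → 0` as `r → 0⁺`. Then `u` is the restriction to `(0,∞)` of an even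
function `v : ℝ → ℝⁿ` of class `C³` which satisfies the profile equation for
every `r ≠ 0`, and at the origin `v'(0) = 0` and `v''(0) = ∇V(v(0))/d`. -/
theorem radial_profile_even_C3_extension
    {n : ℕ} (hn : 1 ≤ n) {d : ℕ} (hd : 2 ≤ d)
    (V : EuclideanSpace ℝ (Fin n) → ℝ) (hV : ContDiff ℝ 2 V)
    (u u' : ℝ → EuclideanSpace ℝ (Fin n))
    (hu : ∀ r, 0 < r → HasDerivAt u (u' r) r)
    (hu' : ∀ r, 0 < r → HasDerivAt u'
      (-(((d : ℝ) - 1) / r) • u' r + gradient V (u r)) r)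
    (hu'0 : Tendsto u' (nhdsWithin 0 (Ioi 0)) (nhds 0)) :
    ∃ v : ℝ → EuclideanSpace ℝ (Fin n),
      ContDiff ℝ 3 v ∧
      (∀ r : ℝ, v (-r) = v r) ∧
      (∀ r, 0 < r → v r = u r) ∧
      (∀ r : ℝ, r ≠ 0 → deriv (deriv v) r
        = -(((d : ℝ) - 1) / r) • deriv v r + gradient V (v r)) ∧
      deriv v 0 = 0 ∧
      deriv (deriv v) 0 = ((d : ℝ)⁻¹) • gradient V (v 0) :=
  radial_profile_even_C3_extension_general hd V hV u u' hu hu' hu'0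
end
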